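/- arXiv:1703.04814 — 2 statements merged into one kernel-verified Lean document; each statement's English description precedes it below -/
import Mathlib

section
/- Any permutation π of {1,…,n} can be partitioned into at most ⌈√n⌉ increasing subsequences together with at most ⌈√n⌉ decreasing subsequences. (Dilworth-type decomposition used in the unit-Monge labeling scheme.) -/
/-!
Embed `i ↦ (i, π i)` into `Fin n × (Fin n)ᵒᵈ`: chains are then decreasing subsequences and
antichains increasing ones. With `s = ⌈√n⌉`, repeatedly remove a chain with more than `s`
elements; since `n < (s + 1)²` this happens at most `s` times. Afterwards every chain has at
most `s` elements, and Mirsky's argument (repeatedly remove the maximal elements, which form an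
antichain and shorten every chain) splits what is left into `s` antichains.
-/

open Finset OrderDual

section ChainAntichainColoring

variable {α : Type*} [PartialOrder α]

def IsChainAntichainColoring (S : Finset α) (a b : ℕ) (c : α → ℕ) : Prop :=
  (∀ x ∈ S, c x < a + b) ∧
  (∀ m < a, IsAntichain (· ≤ ·) {x | x ∈ S ∧ c x = m}) ∧
  (∀ m, a ≤ m → IsChain (· ≤ ·) {x | x ∈ S ∧ c x = m})

namespace IsChainAntichainColoring

variable {S : Finset α} {a b : ℕ} {c : α → ℕ}

lemma mono (hc : IsChainAntichainColoring S a b c) {b' : ℕ} (hb : b ≤ b') :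
    IsChainAntichainColoring S a b' c :=
  ⟨fun x hx => (hc.1 x hx).trans_le (by omega), hc.2⟩

lemma ite_antichain [DecidableEq α] {A : Finset α} (hc : IsChainAntichainColoring (S \ A) a 0 c)
    (hA : IsAntichain (· ≤ ·) (A : Set α)) :
    IsChainAntichainColoring S (a + 1) 0 (fun x => if x ∈ A then a else c x) := by
  have hlt : ∀ x ∈ S, x ∉ A → c x < a := fun x hx hxA => hc.1 x (mem_sdiff.2 ⟨hx, hxA⟩)
  refine ⟨fun x hx => ?_, fun m hm x ⟨hx, hxm⟩ y ⟨hy, hym⟩ hxy => ?_,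
    fun m hm x ⟨hx, hxm⟩ => ?_⟩
  · dsimp only; split_ifs with hxA
    · omega
    · have := hlt x hx hxA; omega
  · by_cases hxA : x ∈ A <;> by_cases hyA : y ∈ A <;>
      simp only [hxA, hyA, if_true, if_false] at hxm hym
    · exact hA hxA hyA hxy
    · exact absurd (hym.trans hxm.symm) (hlt y hy hyA).ne
    · exact absurd (hxm.trans hym.symm) (hlt x hx hxA).ne
    · exact hc.2.1 m (hxm ▸ hlt x hx hxA) ⟨mem_sdiff.2 ⟨hx, hxA⟩, hxm⟩
        ⟨mem_sdiff.2 ⟨hy, hyA⟩, hym⟩ hxy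
  · by_cases hxA : x ∈ A <;> simp only [hxA, if_true, if_false] at hxm
    · omega
    · have := hlt x hx hxA; omega

lemma ite_chain [DecidableEq α] {C : Finset α} (hc : IsChainAntichainColoring (S \ C) a b c)
    (hC : IsChain (· ≤ ·) (C : Set α)) :
    IsChainAntichainColoring S a (b + 1) (fun x => if x ∈ C then a + b else c x) := by
  have hlt : ∀ x ∈ S, x ∉ C → c x < a + b := fun x hx hxC => hc.1 x (mem_sdiff.2 ⟨hx, hxC⟩)
  refine ⟨fun x hx => ?_, fun m hm x ⟨hx, hxm⟩ y ⟨hy, hym⟩ hxy => ?_,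
    fun m hm x ⟨hx, hxm⟩ y ⟨hy, hym⟩ hxy => ?_⟩
  · dsimp only; split_ifs with hxC
    · omega
    · have := hlt x hx hxC; omega
  · by_cases hxC : x ∈ C <;> by_cases hyC : y ∈ C <;>
      simp only [hxC, hyC, if_true, if_false] at hxm hym
    all_goals try omega
    exact hc.2.1 m hm ⟨mem_sdiff.2 ⟨hx, hxC⟩, hxm⟩ ⟨mem_sdiff.2 ⟨hy, hyC⟩, hym⟩ hxy
  · by_cases hxC : x ∈ C <;> by_cases hyC : y ∈ C <;>
      simp only [hxC, hyC, if_true, if_false] at hxm hym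
    · exact hC hxC hyC hxy
    · exact absurd (hym.trans hxm.symm) (hlt y hy hyC).ne
    · exact absurd (hxm.trans hym.symm) (hlt x hx hxC).ne
    · exact hc.2.2 m hm ⟨mem_sdiff.2 ⟨hx, hxC⟩, hxm⟩ ⟨mem_sdiff.2 ⟨hy, hyC⟩, hym⟩ hxy

end IsChainAntichainColoring

lemma IsChain.exists_forall_lt_of_forall_exists_lt {S C : Finset α}
    (hC : IsChain (· ≤ ·) (C : Set α)) (hne : C.Nonempty) (h : ∀ x ∈ C, ∃ y ∈ S, x < y) :
    ∃ y ∈ S, ∀ x ∈ C, x < y := by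
  obtain ⟨z, hz⟩ := C.exists_maximal hne
  obtain ⟨y, hyS, hzy⟩ := h z hz.prop
  refine ⟨y, hyS, fun x hx => ?_⟩
  rcases eq_or_ne x z with rfl | hxz
  · exact hzy
  · rcases hC hx hz.prop hxz with hle | hle
    · exact hle.trans_lt hzy
    · exact absurd (hle.lt_of_ne hxz.symm) (hz.not_gt hx)

theorem exists_isChainAntichainColoring_of_forall_chain_card_le (S : Finset α) (s : ℕ)
    (h : ∀ C ⊆ S, IsChain (· ≤ ·) (C : Set α) → #C ≤ s) :
    ∃ c, IsChainAntichainColoring S s 0 c := by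
  classical
  induction s generalizing S with
  | zero =>
    have hS : S = ∅ := eq_empty_of_forall_notMem fun x hx => by
      simpa using h {x} (singleton_subset_iff.2 hx) (by simp)
    subst hS
    exact ⟨0, by simp [IsChainAntichainColoring]⟩
  | succ s ih =>
    set A := S.filter (fun x => ∀ y ∈ S, ¬ x < y)
    have hA : IsAntichain (· ≤ ·) (A : Set α) := fun x hx y hy hxy hle => by
      simp only [coe_filter, Set.mem_ofPred_eq, A] at hx hy
      exact hx.2 y hy.1 (hle.lt_of_ne hxy)
    obtain ⟨c, hc⟩ := ih (S \ A) fun C hCS hC => by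
      rcases C.eq_empty_or_nonempty with rfl | hne
      · simp
      have hup : ∀ x ∈ C, ∃ y ∈ S, x < y := fun x hx => by
        obtain ⟨hxS, hxA⟩ := mem_sdiff.1 (hCS hx)
        simpa [A, hxS] using hxA
      obtain ⟨y, hyS, hy⟩ := hC.exists_forall_lt_of_forall_exists_lt hne hup
      have hyC : y ∉ C := fun hyC => lt_irrefl y (hy y hyC)
      have hchain : IsChain (· ≤ ·) ((insert y C : Finset α) : Set α) := by
        rw [coe_insert]
        exact hC.insert fun x hx _ => Or.inr (hy x hx).le
      have := h (insert y C) (insert_subset hyS (hCS.trans sdiff_subset)) hchain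
      rw [card_insert_of_notMem hyC] at this
      omega
    exact ⟨_, hc.ite_antichain hA⟩

theorem exists_isChainAntichainColoring_of_card_lt (S : Finset α) (s k : ℕ)
    (hS : #S < (k + 1) * (s + 1)) : ∃ c, IsChainAntichainColoring S s k c := by
  classical
  induction k generalizing S with
  | zero =>
    refine exists_isChainAntichainColoring_of_forall_chain_card_le S s fun C hCS _ => ?_
    have := card_le_card hCS
    omega
  | succ k ih =>
    by_cases hlong : ∃ C ⊆ S, IsChain (· ≤ ·) (C : Set α) ∧ s < #C
    · obtain ⟨C, hCS, hC, hCs⟩ := hlong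
      have hSC : #(S \ C) < (k + 1) * (s + 1) := by
        have := card_le_card hCS
        rw [card_sdiff_of_subset hCS]
        rw [add_one_mul (k + 1)] at hS
        omega
      obtain ⟨c, hc⟩ := ih (S \ C) hSC
      exact ⟨_, hc.ite_chain hC⟩
    · push Not at hlong
      obtain ⟨c, hc⟩ := exists_isChainAntichainColoring_of_forall_chain_card_le S s hlong
      exact ⟨c, hc.mono (Nat.zero_le _)⟩

end ChainAntichainColoring

theorem Function.Injective.exists_strictMono_strictAnti_coloring {ι β : Type*} [LinearOrder ι]
    [LinearOrder β] [Fintype ι] {f : ι → β} (hf : Function.Injective f) (s k : ℕ)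
    (hcard : Fintype.card ι < (k + 1) * (s + 1)) :
    ∃ c : ι → ℕ, (∀ i, c i < s + k) ∧
      ∀ i j, i < j → c i = c j → (c i < s → f i < f j) ∧ (s ≤ c i → f j < f i) := by
  let e : ι ↪ ι × βᵒᵈ := ⟨fun i => (i, toDual (f i)), fun i j h => congrArg Prod.fst h⟩
  have he : ∀ i j, e i ≤ e j ↔ i ≤ j ∧ f j ≤ f i := fun _ _ => Iff.rfl
  obtain ⟨c, hbound, hanti, hchain⟩ :=
    exists_isChainAntichainColoring_of_card_lt (univ.map e) s k (by simpa using hcard)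
  have hmem : ∀ i, e i ∈ univ.map e := fun i => mem_map_of_mem e (mem_univ i)
  refine ⟨c ∘ e, fun i => hbound _ (hmem i), fun i j hij hc => ⟨fun hlt => ?_, fun hge => ?_⟩⟩
  · have : ¬ e i ≤ e j := hanti _ hlt ⟨hmem i, rfl⟩ ⟨hmem j, hc.symm⟩ (e.injective.ne hij.ne)
    rw [he, not_and, not_le] at this
    exact this hij.le
  · rcases hchain _ hge ⟨hmem i, rfl⟩ ⟨hmem j, hc.symm⟩ (e.injective.ne hij.ne) with h | h
    · exact ((he i j).1 h).2.lt_of_ne (hf.ne hij.ne')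
    · exact absurd ((he j i).1 h).1 hij.not_ge

lemma le_ceil_sqrt_mul_self (n : ℕ) : n ≤ ⌈Real.sqrt n⌉₊ * ⌈Real.sqrt n⌉₊ := by
  have : (n : ℝ) ≤ ⌈Real.sqrt n⌉₊ ^ 2 := (Real.sqrt_le_iff.1 (Nat.le_ceil _)).2
  exact_mod_cast sq (⌈Real.sqrt n⌉₊ : ℝ) ▸ this

/-- Any permutation of `{1,…,n}` can be partitioned into at most `⌈√n⌉`
increasing subsequences together with at most `⌈√n⌉` decreasing subsequences:
there is a coloring with `2⌈√n⌉` colors such that low colors are increasing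
classes and high colors are decreasing classes. -/
theorem stmt_3 (n : ℕ) (π : Equiv.Perm (Fin n)) :
    ∃ c : Fin n → ℕ,
      (∀ i, c i < 2 * ⌈Real.sqrt n⌉₊) ∧
      (∀ i j : Fin n, i < j → c i = c j →
        (c i < ⌈Real.sqrt n⌉₊ → π i < π j) ∧
        (⌈Real.sqrt n⌉₊ ≤ c i → π j < π i)) := by
  set s := ⌈Real.sqrt n⌉₊
  have hn : Fintype.card (Fin n) < (s + 1) * (s + 1) := by
    have := le_ceil_sqrt_mul_self n
    rw [Fintype.card_fin]
    nlinarith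
  rw [two_mul]
  exact π.injective.exists_strictMono_strictAnti_coloring s s hn
end

section
/- Active rows invariant (from the labeling lower-bound construction): process blocks B[i',j'] of a √n×√n grid in lexicographic order; when handling block (i',j') with b[i',j']=1, one must pick an unused row in a range of √n rows and an unused column in a range of √n columns. At the time block (i',j') is processed, fewer than i' rows in its row range and fewer than j' columns in its column range have been used; since i', j' < √n, an unused row and column always exist, so the greedy construction of the permutation matrix always succeeds. -/
/-- The greedy construction in the labeling lower bound always succeeds: for
any bit matrix `b` on the `m×m` grid of blocks, there is a partial permutation
matrix `P` of size `m²×m²` (at most one `1` per row and per column) having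
exactly `b[i',j']` ones in each `m×m` block `(i',j')`. -/
theorem stmt_19 (m : ℕ) (b : Fin m → Fin m → Bool) :
    ∃ P : Fin (m * m) → Fin (m * m) → Bool,
      (∀ r, (Finset.univ.filter (fun c => P r c = true)).card ≤ 1) ∧
      (∀ c, (Finset.univ.filter (fun r => P r c = true)).card ≤ 1) ∧
      (∀ i' j' : Fin m,
        (Finset.univ.filter (fun p : Fin (m * m) × Fin (m * m) =>
          P p.1 p.2 = true ∧ (p.1 : ℕ) / m = (i' : ℕ) ∧ (p.2 : ℕ) / m = (j' : ℕ))).card =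
        if b i' j' then 1 else 0) := by
  rcases Nat.eq_zero_or_pos m with hm | hm
  · subst hm
    refine ⟨fun _ _ => false, ?_, ?_, ?_⟩
    · intro r; exact r.elim0
    · intro c; exact c.elim0
    · intro i'; exact i'.elim0
  have hdiv : ∀ r : Fin (m * m), (r : ℕ) / m < m := fun r =>
    (Nat.div_lt_iff_lt_mul hm).2 r.isLt
  have hmod : ∀ r : Fin (m * m), (r : ℕ) % m < m := fun r => Nat.mod_lt _ hm
  have hdm : ∀ (a c : Fin m), ((a : ℕ) * m + c) / m = a ∧ ((a : ℕ) * m + c) % m = c := by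
    intro a c
    constructor
    · rw [Nat.add_comm, Nat.add_mul_div_right _ _ hm, Nat.div_eq_of_lt c.isLt, Nat.zero_add]
    · rw [Nat.add_comm, Nat.add_mul_mod_self_right, Nat.mod_eq_of_lt c.isLt]
  have hlt : ∀ (a c : Fin m), (a : ℕ) * m + c < m * m := by
    intro a c
    calc (a : ℕ) * m + c < (a : ℕ) * m + m := by omega
    _ = ((a : ℕ) + 1) * m := by ring
    _ ≤ m * m := Nat.mul_le_mul_right _ a.isLt
  refine ⟨fun r c =>
      (decide ((r : ℕ) % m = (c : ℕ) / m) && decide ((r : ℕ) / m = (c : ℕ) % m))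
        && b ⟨(r : ℕ) / m, hdiv r⟩ ⟨(r : ℕ) % m, hmod r⟩, ?_, ?_, ?_⟩
  · intro r
    refine Finset.card_le_one.2 ?_
    intro a ha a' ha'
    simp only [Finset.mem_filter, Finset.mem_univ, true_and, Bool.and_eq_true,
      decide_eq_true_eq] at ha ha'
    obtain ⟨⟨e1, e2⟩, -⟩ := ha
    obtain ⟨⟨e3, e4⟩, -⟩ := ha'
    refine Fin.ext ?_
    rw [← Nat.div_add_mod (a : ℕ) m, ← Nat.div_add_mod (a' : ℕ) m,
      ← e1, ← e2, ← e3, ← e4]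
  · intro c
    refine Finset.card_le_one.2 ?_
    intro a ha a' ha'
    simp only [Finset.mem_filter, Finset.mem_univ, true_and, Bool.and_eq_true,
      decide_eq_true_eq] at ha ha'
    obtain ⟨⟨e1, e2⟩, -⟩ := ha
    obtain ⟨⟨e3, e4⟩, -⟩ := ha'
    refine Fin.ext ?_
    rw [← Nat.div_add_mod (a : ℕ) m, ← Nat.div_add_mod (a' : ℕ) m,
      e1, e2, e3, e4]
  · intro i' j'
    by_cases hb : b i' j' = true
    · rw [if_pos hb, Finset.card_eq_one]
      refine ⟨(⟨(i' : ℕ) * m + j', hlt i' j'⟩, ⟨(j' : ℕ) * m + i', hlt j' i'⟩), ?_⟩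
      ext p
      simp only [Finset.mem_filter, Finset.mem_univ, true_and, Bool.and_eq_true,
        decide_eq_true_eq, Finset.mem_singleton]
      constructor
      · rintro ⟨⟨⟨hmdiv, hdmod⟩, hbp⟩, hdi, hdj⟩
        have H1 := Nat.div_add_mod (p.1 : ℕ) m
        have H2 := Nat.div_add_mod (p.2 : ℕ) m
        rw [hdi] at H1
        rw [hmdiv, hdj] at H1
        rw [hdj] at H2
        rw [← hdmod, hdi] at H2
        have hp1 : p.1 = (⟨(i' : ℕ) * m + j', hlt i' j'⟩ : Fin (m * m)) :=
          Fin.ext (by rw [← H1]; ring)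
        have hp2 : p.2 = (⟨(j' : ℕ) * m + i', hlt j' i'⟩ : Fin (m * m)) :=
          Fin.ext (by rw [← H2]; ring)
        exact Prod.ext hp1 hp2
      · rintro rfl
        obtain ⟨d1, m1⟩ := hdm i' j'
        obtain ⟨d2, m2⟩ := hdm j' i'
        refine ⟨⟨⟨by rw [m1, d2], by rw [d1, m2]⟩, ?_⟩, d1, d2⟩
        convert hb using 2 <;> exact Fin.ext (by simp [d1, m1])
    · rw [if_neg hb, Finset.card_eq_zero]
      rw [Finset.filter_eq_empty_iff]
      rintro p -
      simp only [Bool.and_eq_true, decide_eq_true_eq, not_and]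
      rintro ⟨⟨hmdiv, hdmod⟩, hbp⟩ hdi hdj
      apply hb
      have hi : (⟨(p.1 : ℕ) / m, hdiv p.1⟩ : Fin m) = i' := Fin.ext hdi
      have hj : (⟨(p.1 : ℕ) % m, hmod p.1⟩ : Fin m) = j' := Fin.ext (hmdiv.trans hdj)
      rw [← hi, ← hj]; exact hbp
end
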